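/- Let q ≥ p ≥ 1, n ∈ ℕ, and z ∈ ℂ^N. Then σ_{3n}(z)_{ℓ_q} ≤ n^{1/q−1/p} · σ_{2n}(z)_{ℓ_p}. -/

import Mathlib

open scoped BigOperators
open scoped Classical

/-- The `ℓ_p` norm of a finite complex vector. -/
noncomputable def lpNorm {ι : Type*} [Fintype ι] (p : ℝ) (v : ι → ℂ) : ℝ :=
  (∑ i, ‖v i‖ ^ p) ^ (1 / p)

/-- Number of nonzero entries of a vector. -/
noncomputable def sparsity {ι : Type*} [Fintype ι] (v : ι → ℂ) : ℕ :=
  (Finset.univ.filter fun i => v i ≠ 0).card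

/-- Best `n`-term approximation error of `v` in `ℓ_p`. -/
noncomputable def bestApprox {ι : Type*} [Fintype ι] (n : ℕ) (p : ℝ) (v : ι → ℂ) : ℝ :=
  sInf {t : ℝ | ∃ z : ι → ℂ, sparsity z ≤ n ∧ t = lpNorm p (v - z)}

/-- `A` satisfies the restricted isometry property of order `n` with constant `δ`. -/
def HasRIP {m : ℕ} {ι : Type*} [Fintype ι] (A : Matrix (Fin m) ι ℂ) (n : ℕ) (δ : ℝ) : Prop :=
  ∀ v : ι → ℂ, sparsity v ≤ n →
    (1 - δ) * lpNorm 2 v ^ 2 ≤ lpNorm 2 (A.mulVec v) ^ 2 ∧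
      lpNorm 2 (A.mulVec v) ^ 2 ≤ (1 + δ) * lpNorm 2 v ^ 2

/-- `A` satisfies the `ℓ₂`-robust null space property of order `n`
with constants `ρ` and `τ`. -/
def HasNSP {m : ℕ} {ι : Type*} [Fintype ι] (A : Matrix (Fin m) ι ℂ) (n : ℕ) (ρ τ : ℝ) : Prop :=
  ∀ (v : ι → ℂ) (S : Finset ι), S.card ≤ n →
    lpNorm 2 (fun i => if i ∈ S then v i else 0) ≤
      ρ * (n : ℝ) ^ (-(1 : ℝ) / 2) * lpNorm 1 (fun i => if i ∈ S then 0 else v i) +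
        τ * lpNorm 2 (A.mulVec v)

/-!
Order the entries of `z` by modulus, let `S` be the indices of the `2n` largest ones and `S'` those
of the `3n` largest, so that both best approximation errors are tails: `σ_{3n}(z)_q` is the
`ℓ_q`-norm of `z` off `S'` and `σ_{2n}(z)_p` the `ℓ_p`-norm of `z` off `S`. Every entry off `S'` is
dominated by each of the `n` entries indexed by `S' \ S`, hence its `p`-th power is at most
`M^p := σ_{2n}(z)_p^p / n`. Then `Σ_{j ∉ S'} |z_j|^q ≤ M^{q-p} Σ_{j ∉ S} |z_j|^p = n M^q`, and
`n^{1/q} M = n^{1/q-1/p} σ_{2n}(z)_p`.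
-/

open Finset

section BestApprox

variable {ι : Type*} [Fintype ι]

lemma lpNorm_nonneg (p : ℝ) (v : ι → ℂ) : 0 ≤ lpNorm p v := by
  unfold lpNorm
  positivity

lemma lpNorm_zero {p : ℝ} (hp : 0 < p) : lpNorm p (0 : ι → ℂ) = 0 := by
  simp [lpNorm, Real.zero_rpow hp.ne', hp.ne']

lemma sparsity_le_card (v : ι → ℂ) : sparsity v ≤ Fintype.card ι :=
  card_filter_le _ _

lemma bestApprox_le {n : ℕ} {p : ℝ} {v w : ι → ℂ} (hw : sparsity w ≤ n) :
    bestApprox n p v ≤ lpNorm p (v - w) :=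
  csInf_le ⟨0, fun _ ⟨_, _, ht⟩ => ht ▸ lpNorm_nonneg p _⟩ ⟨w, hw, rfl⟩

lemma le_bestApprox {n : ℕ} {p c : ℝ} {v : ι → ℂ}
    (h : ∀ w : ι → ℂ, sparsity w ≤ n → c ≤ lpNorm p (v - w)) : c ≤ bestApprox n p v :=
  le_csInf ⟨_, 0, by simp [sparsity], rfl⟩ fun _ ⟨w, hw, ht⟩ => ht ▸ h w hw

lemma bestApprox_nonneg (n : ℕ) (p : ℝ) (v : ι → ℂ) : 0 ≤ bestApprox n p v :=
  le_bestApprox fun _ _ => lpNorm_nonneg p _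

end BestApprox

section TopSets

variable {ι : Type*}

lemma sum_le_sum_of_forall_le_of_card_le {A B : Finset ι} {f : ι → ℝ} (hB : ∀ b ∈ B, 0 ≤ f b)
    (hcard : #A ≤ #B) (hle : ∀ a ∈ A, ∀ b ∈ B, f a ≤ f b) : ∑ a ∈ A, f a ≤ ∑ b ∈ B, f b := by
  rcases B.eq_empty_or_nonempty with rfl | hBne
  · simp_all
  obtain ⟨b₀, hb₀, hmin⟩ := B.exists_min_image f hBne
  calc ∑ a ∈ A, f a ≤ #A • f b₀ := sum_le_card_nsmul _ _ _ fun a ha => hle a ha b₀ hb₀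
    _ ≤ #B • f b₀ := nsmul_le_nsmul_left (hB b₀ hb₀) hcard
    _ ≤ ∑ b ∈ B, f b := card_nsmul_le_sum _ _ _ hmin

lemma sum_le_sum_of_card_le_of_forall_compl_le {S U : Finset ι} {f : ι → ℝ} (hf : ∀ i, 0 ≤ f i)
    (hcard : #U ≤ #S) (htop : ∀ i ∈ S, ∀ j ∉ S, f j ≤ f i) : ∑ i ∈ U, f i ≤ ∑ i ∈ S, f i := by
  have hdiff : ∑ i ∈ U \ S, f i ≤ ∑ i ∈ S \ U, f i := by
    refine sum_le_sum_of_forall_le_of_card_le (fun i _ => hf i) ?_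
      fun j hj i hi => htop i (mem_sdiff.1 hi).1 j (mem_sdiff.1 hj).2
    have := card_inter_add_card_sdiff U S
    have := card_inter_add_card_sdiff S U
    rw [inter_comm] at this
    omega
  rw [← sum_inter_add_sum_sdiff U S, ← sum_inter_add_sum_sdiff S U, inter_comm]
  linarith

lemma exists_subset_card_eq_forall_le [DecidableEq ι] (f : ι → ℝ) {U : Finset ι} {k : ℕ}
    (hk : k ≤ #U) :
    ∃ S ⊆ U, #S = k ∧ ∀ i ∈ S, ∀ j ∈ U \ S, f j ≤ f i := by
  induction k with
  | zero => exact ⟨∅, empty_subset _, card_empty, by simp⟩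
  | succ k ih =>
    obtain ⟨S, hSU, hcard, htop⟩ := ih (by omega)
    have hne : (U \ S).Nonempty := by
      rw [← card_pos, card_sdiff_of_subset hSU]
      omega
    obtain ⟨m, hm, hmax⟩ := (U \ S).exists_max_image f hne
    refine ⟨insert m S, insert_subset (mem_sdiff.1 hm).1 hSU,
      by rw [card_insert_of_notMem (mem_sdiff.1 hm).2, hcard], ?_⟩
    intro i hi j hj
    obtain ⟨hjU, hj⟩ := mem_sdiff.1 hj
    rw [mem_insert, not_or] at hj
    rcases mem_insert.1 hi with rfl | hiS
    · exact hmax j (mem_sdiff.2 ⟨hjU, hj.2⟩)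
    · exact htop i hiS j (mem_sdiff.2 ⟨hjU, hj.2⟩)

lemma exists_nested_subsets_forall_le [Fintype ι] [DecidableEq ι] (f : ι → ℝ) {k l : ℕ}
    (hkl : k ≤ l) (hl : l ≤ Fintype.card ι) :
    ∃ S S' : Finset ι, S ⊆ S' ∧ #S = k ∧ #S' = l ∧
      (∀ i ∈ S, ∀ j ∉ S, f j ≤ f i) ∧ (∀ i ∈ S', ∀ j ∉ S', f j ≤ f i) := by
  obtain ⟨S', -, hS', htopS'⟩ :=
    exists_subset_card_eq_forall_le f (U := univ) (k := l) (by rwa [card_univ])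
  obtain ⟨S, hSS', hS, htopS⟩ := exists_subset_card_eq_forall_le f (hS'.symm ▸ hkl)
  have htopS' : ∀ i ∈ S', ∀ j ∉ S', f j ≤ f i := fun i hi j hj =>
    htopS' i hi j (mem_sdiff.2 ⟨mem_univ j, hj⟩)
  refine ⟨S, S', hSS', hS, hS', fun i hi j hj => ?_, htopS'⟩
  by_cases hjS' : j ∈ S'
  · exact htopS i hi j (mem_sdiff.2 ⟨hjS', hj⟩)
  · exact htopS' i (hSS' hi) j hjS'

end TopSets

lemma bestApprox_card_eq_rpow_sum_compl {ι : Type*} [Fintype ι] [DecidableEq ι] {p : ℝ}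
    (hp : 0 < p) {v : ι → ℂ} {S : Finset ι} (htop : ∀ i ∈ S, ∀ j ∉ S, ‖v j‖ ≤ ‖v i‖) :
    bestApprox #S p v = (∑ i ∈ Sᶜ, ‖v i‖ ^ p) ^ (1 / p) := by
  apply le_antisymm
  · set w : ι → ℂ := fun i => if i ∈ S then v i else 0
    have hw : sparsity w ≤ #S :=
      card_le_card fun i hi => by_contra fun h => (mem_filter.1 hi).2 (if_neg h)
    refine (bestApprox_le hw).trans_eq ?_
    rw [lpNorm, ← sum_add_sum_compl S]
    congr 1
    rw [sum_eq_zero fun i hi => by simp [w, hi, Real.zero_rpow hp.ne'], zero_add]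
    exact sum_congr rfl fun i hi => by simp [w, mem_compl.1 hi]
  · refine le_bestApprox fun w hw => ?_
    set U := univ.filter fun i => w i ≠ 0
    have hvU : ∑ i ∈ U, ‖v i‖ ^ p ≤ ∑ i ∈ S, ‖v i‖ ^ p :=
      sum_le_sum_of_card_le_of_forall_compl_le (fun i => by positivity) hw
        fun i hi j hj => Real.rpow_le_rpow (norm_nonneg _) (htop i hi j hj) hp.le
    have hUc : ∑ i ∈ Uᶜ, ‖v i‖ ^ p ≤ ∑ i, ‖(v - w) i‖ ^ p := by
      rw [← sum_add_sum_compl U fun i => ‖(v - w) i‖ ^ p]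
      refine le_add_of_nonneg_of_le (by positivity) (sum_le_sum fun i hi => ?_)
      have hwi : w i = 0 := by simpa [U] using hi
      simp [hwi]
    have := sum_add_sum_compl U fun i => ‖v i‖ ^ p
    have := sum_add_sum_compl S fun i => ‖v i‖ ^ p
    exact Real.rpow_le_rpow (by positivity) (by linarith) (by positivity)

lemma rpow_le_rpow_sub_mul_rpow {x M p q : ℝ} (hx : 0 ≤ x) (hxM : x ≤ M) (hpq : p ≤ q)
    (hq : q ≠ 0) : x ^ q ≤ M ^ (q - p) * x ^ p := by
  calc x ^ q = x ^ (q - p) * x ^ p := by rw [← Real.rpow_add' hx (by simpa)]; ring_nf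
    _ ≤ M ^ (q - p) * x ^ p := by gcongr

lemma rpow_sum_rpow_le_card_rpow_mul {ι : Type*} {x : ι → ℝ} (hx : ∀ i, 0 ≤ x i) {p q : ℝ}
    (hp : 0 < p) (hpq : p ≤ q) {s t u : Finset ι} (hst : Disjoint s t) (hsu : s ⊆ u)
    (htu : t ⊆ u) (ht : t.Nonempty) (hle : ∀ i ∈ t, ∀ j ∈ s, x j ≤ x i) :
    (∑ j ∈ s, x j ^ q) ^ (1 / q) ≤
      (t.card : ℝ) ^ (1 / q - 1 / p) * (∑ i ∈ u, x i ^ p) ^ (1 / p) := by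
  have hq : 0 < q := hp.trans_le hpq
  have hxp : ∀ i, 0 ≤ x i ^ p := fun i => Real.rpow_nonneg (hx i) p
  set E := ∑ i ∈ u, x i ^ p
  set n := (t.card : ℝ)
  set M := (E / n) ^ (1 / p) with hM_def
  have hn : 0 < n := by simpa [n] using ht
  have hE : 0 ≤ E := sum_nonneg fun i _ => hxp i
  have hM : 0 ≤ M := by positivity
  have hst_le : ∑ j ∈ s, x j ^ p + ∑ i ∈ t, x i ^ p ≤ E := by
    rw [← sum_union hst]
    exact sum_le_sum_of_subset_of_nonneg (union_subset hsu htu) fun i _ _ => hxp i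
  have hxM : ∀ j ∈ s, x j ≤ M := by
    intro j hj
    have hcard := card_nsmul_le_sum t (fun i => x i ^ p) (x j ^ p)
      fun i hi => Real.rpow_le_rpow (hx j) (hle i hi j hj) hp.le
    rw [nsmul_eq_mul] at hcard
    rw [hM_def, one_div, Real.le_rpow_inv_iff_of_pos (hx j) (by positivity) hp, le_div_iff₀' hn]
    linarith [sum_nonneg fun i (_ : i ∈ s) => hxp i]
  have hEM : E = n * M ^ p := by
    rw [hM_def, one_div, Real.rpow_inv_rpow (by positivity) hp.ne', mul_div_cancel₀ _ hn.ne']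
  have hsum : ∑ j ∈ s, x j ^ q ≤ n * M ^ q :=
    calc ∑ j ∈ s, x j ^ q ≤ ∑ j ∈ s, M ^ (q - p) * x j ^ p :=
          sum_le_sum fun j hj => rpow_le_rpow_sub_mul_rpow (hx j) (hxM j hj) hpq hq.ne'
      _ = M ^ (q - p) * ∑ j ∈ s, x j ^ p := (mul_sum _ _ _).symm
      _ ≤ M ^ (q - p) * E := by
          gcongr
          linarith [sum_nonneg fun i (_ : i ∈ t) => hxp i]
      _ = n * M ^ q := by
          rw [hEM, mul_left_comm, ← Real.rpow_add' hM (by simpa using hq.ne'), sub_add_cancel]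
  calc (∑ j ∈ s, x j ^ q) ^ (1 / q) ≤ (n * M ^ q) ^ (1 / q) := by
        gcongr
        exact sum_nonneg fun j _ => Real.rpow_nonneg (hx j) q
    _ = n ^ (1 / q) * M := by
        rw [Real.mul_rpow hn.le (Real.rpow_nonneg hM q), one_div q, Real.rpow_rpow_inv hM hq.ne']
    _ = n ^ (1 / q - 1 / p) * E ^ (1 / p) := by
        rw [hM_def, Real.div_rpow hE hn.le, Real.rpow_sub hn]
        field_simp

/-- **Comparison of best term approximations** (cf. Dũng–Temlyakov–Ullrich,
Lem. 7.4.1 and the corollary used in the paper): for `q ≥ p ≥ 1`,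
`σ_{3n}(z)_q ≤ n^{1/q−1/p} σ_{2n}(z)_p`. -/
theorem stmt17 {N : ℕ} (p q : ℝ) (hp : 1 ≤ p) (hpq : p ≤ q) (n : ℕ) (hn : 0 < n)
    (z : Fin N → ℂ) :
    bestApprox (3 * n) q z ≤ (n : ℝ) ^ (1 / q - 1 / p) * bestApprox (2 * n) p z := by
  have hp0 : 0 < p := by linarith
  by_cases hN : N ≤ 3 * n
  · have hz : sparsity z ≤ 3 * n := (sparsity_le_card z).trans (by simpa using hN)
    calc bestApprox (3 * n) q z ≤ lpNorm q (z - z) := bestApprox_le hz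
      _ = 0 := by rw [sub_self, lpNorm_zero (by linarith)]
      _ ≤ _ := mul_nonneg (by positivity) (bestApprox_nonneg _ _ _)
  obtain ⟨S, S', hSS', hS, hS', htopS, htopS'⟩ :=
    exists_nested_subsets_forall_le (fun i => ‖z i‖) (by omega : 2 * n ≤ 3 * n)
      (by rw [Fintype.card_fin]; omega)
  have hT : #(S' \ S) = n := by rw [card_sdiff_of_subset hSS', hS, hS']; omega
  rw [← hS, ← hS', bestApprox_card_eq_rpow_sum_compl hp0 htopS,
    bestApprox_card_eq_rpow_sum_compl (hp0.trans_le hpq) htopS']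
  nth_rw 1 [← hT]
  exact rpow_sum_rpow_le_card_rpow_mul (fun i => norm_nonneg _) hp0 hpq
    (disjoint_compl_left.mono_right sdiff_subset) (compl_subset_compl.2 hSS')
    (fun i hi => mem_compl.2 (mem_sdiff.1 hi).2) (card_pos.1 (by omega))
    fun i hi j hj => htopS' i (mem_sdiff.1 hi).1 j (mem_compl.1 hj)
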